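/- Let A be a real symmetric n×n matrix and let P be a real density matrix. If Q₁ and Q₂ are real density matrices, each distinct from P, such that there exist times t₁ > 0 and t₂ > 0 with U(t₁)·P·U(−t₁) = Q₁ and U(t₂)·P·U(−t₂) = Q₂, then Q₁ = Q₂. In other words, there is at most one real density matrix Q ≠ P to which P admits perfect state transfer. -/

import Mathlib

/-!
Since `A` is real, the entrywise conjugate of `U(t)` is `U(-t)`, so conjugating the entries of
`U(t) M U(-t)` for a real `M` gives `U(-t) M U(t)`. Hence if `P` and `Q = U(t) P U(-t)` are both
real, then also `Q = U(-t) P U(t)`, so `2t` lies in the stabilizer `G = {t | U(t) P U(-t) = P}`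
while `t` does not. `G` is a closed subgroup of `ℝ`, not all of `ℝ`, hence `G = aℤ`; then
`t ∈ a/2 + aℤ`, and the state reached at time `t` is `U(a/2) P U(-a/2)`, independent of `t`.
-/

open Matrix
open scoped ComplexOrder

/-- The transition matrix `U(t) = exp(itA)`. -/
noncomputable def U {n : ℕ} (A : Matrix (Fin n) (Fin n) ℂ) (t : ℝ) :
    Matrix (Fin n) (Fin n) ℂ :=
  NormedSpace.exp (((t : ℂ) * Complex.I) • A)

open AddSubgroup

theorem sub_half_mem_zmultiples_of_two_mul_mem {a s : ℝ} (hs : 2 * s ∈ zmultiples a)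
    (hsa : s ∉ zmultiples a) : s - a / 2 ∈ zmultiples a := by
  obtain ⟨k, hk⟩ := mem_zmultiples_iff.1 hs
  rw [zsmul_eq_mul] at hk
  obtain ⟨j, rfl | rfl⟩ := Int.even_or_odd' k
  · exact absurd (mem_zmultiples_iff.2 ⟨j, by push_cast at hk; rw [zsmul_eq_mul]; linarith⟩) hsa
  · exact mem_zmultiples_iff.2 ⟨j, by push_cast at hk; rw [zsmul_eq_mul]; linarith⟩

theorem AddSubgroup.sub_mem_of_two_mul_mem {G : AddSubgroup ℝ} (hG : IsClosed (G : Set ℝ))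
    {s t : ℝ} (hs : 2 * s ∈ G) (ht : 2 * t ∈ G) (hsG : s ∉ G) (htG : t ∉ G) : s - t ∈ G := by
  obtain hd | ⟨a, rfl⟩ := G.dense_or_cyclic
  · exact absurd (hG.closure_subset_iff.2 subset_rfl (hd.closure_eq ▸ Set.mem_univ s)) hsG
  · rw [← zmultiples_eq_closure] at *
    simpa using sub_mem (sub_half_mem_zmultiples_of_two_mul_mem hs hsG)
      (sub_half_mem_zmultiples_of_two_mul_mem ht htG)

theorem Matrix.conjTranspose_transpose_of_im_eq_zero {n : Type*} {M : Matrix n n ℂ}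
    (hM : ∀ i j, (M i j).im = 0) : Mᴴᵀ = M := by
  ext i j
  exact Complex.conj_eq_iff_im.2 (hM i j)

section Transfer

variable {n : ℕ} (A : Matrix (Fin n) (Fin n) ℂ)

theorem U_zero : U A 0 = 1 := by
  simp [U]

theorem U_add (s t : ℝ) : U A (s + t) = U A s * U A t := by
  rw [U, U, U, ← exp_add_of_commute _ _ (((Commute.refl A).smul_left _).smul_right _), ← add_smul]
  push_cast
  ring_nf

theorem continuous_U : Continuous (U A) := by
  open scoped Matrix.Norms.Operator in
  unfold U
  fun_prop

theorem conjTranspose_transpose_U (hA : ∀ i j, (A i j).im = 0) (t : ℝ) :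
    (U A t)ᴴᵀ = U A (-t) := by
  rw [U, U, ← exp_conjTranspose, ← exp_transpose, conjTranspose_smul, transpose_smul,
    conjTranspose_transpose_of_im_eq_zero hA]
  congr 1
  simp

noncomputable def evolve (t : ℝ) (M : Matrix (Fin n) (Fin n) ℂ) : Matrix (Fin n) (Fin n) ℂ :=
  U A t * M * U A (-t)

theorem evolve_zero (M : Matrix (Fin n) (Fin n) ℂ) : evolve A 0 M = M := by
  simp [evolve, U_zero]

theorem evolve_add (s t : ℝ) (M : Matrix (Fin n) (Fin n) ℂ) :
    evolve A (s + t) M = evolve A s (evolve A t M) := by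
  rw [evolve, evolve, evolve, U_add, neg_add_rev, U_add]
  simp only [mul_assoc]

theorem continuous_evolve (M : Matrix (Fin n) (Fin n) ℂ) : Continuous fun t => evolve A t M :=
  ((continuous_U A).matrix_mul continuous_const).matrix_mul ((continuous_U A).comp continuous_neg)

theorem evolve_neg_of_im_eq_zero (hA : ∀ i j, (A i j).im = 0) {P Q : Matrix (Fin n) (Fin n) ℂ}
    (hP : ∀ i j, (P i j).im = 0) (hQ : ∀ i j, (Q i j).im = 0) {t : ℝ} (h : evolve A t P = Q) :
    evolve A (-t) P = Q := by
  have h' := congrArg (fun M => Mᴴᵀ) h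
  simp only [evolve, conjTranspose_mul, transpose_mul, conjTranspose_transpose_U A hA,
    conjTranspose_transpose_of_im_eq_zero hP, conjTranspose_transpose_of_im_eq_zero hQ] at h'
  exact h'

def stabilizer (P : Matrix (Fin n) (Fin n) ℂ) : AddSubgroup ℝ where
  carrier := {t | evolve A t P = P}
  zero_mem' := evolve_zero A P
  add_mem' {s t} hs ht := (evolve_add A s t P).trans <| (congrArg (evolve A s) ht).trans hs
  neg_mem' {t} ht := (congrArg (evolve A (-t)) ht).symm.trans <| by
    rw [← evolve_add, neg_add_cancel, evolve_zero]

theorem mem_stabilizer {P : Matrix (Fin n) (Fin n) ℂ} {t : ℝ} :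
    t ∈ stabilizer A P ↔ evolve A t P = P :=
  Iff.rfl

theorem isClosed_stabilizer (P : Matrix (Fin n) (Fin n) ℂ) :
    IsClosed (stabilizer A P : Set ℝ) :=
  isClosed_eq (continuous_evolve A P) continuous_const

theorem evolve_eq_evolve_of_sub_mem_stabilizer {P : Matrix (Fin n) (Fin n) ℂ} {s t : ℝ}
    (h : s - t ∈ stabilizer A P) : evolve A s P = evolve A t P := by
  rw [← sub_add_cancel s t, evolve_add, ← evolve_add, add_comm, evolve_add, h]

theorem two_mul_mem_stabilizer (hA : ∀ i j, (A i j).im = 0) {P Q : Matrix (Fin n) (Fin n) ℂ}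
    (hP : ∀ i j, (P i j).im = 0) (hQ : ∀ i j, (Q i j).im = 0) {t : ℝ} (h : evolve A t P = Q) :
    2 * t ∈ stabilizer A P := by
  rw [mem_stabilizer, two_mul, evolve_add, h, ← evolve_neg_of_im_eq_zero A hA hP hQ h,
    ← evolve_add, add_neg_cancel, evolve_zero]

end Transfer

theorem stmt_11_general {n : ℕ}
    (A : Matrix (Fin n) (Fin n) ℂ)
    (hAreal : ∀ i j, (A i j).im = 0)
    (P : Matrix (Fin n) (Fin n) ℂ)
    (hPreal : ∀ i j, (P i j).im = 0)
    (Q₁ Q₂ : Matrix (Fin n) (Fin n) ℂ)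
    (hQ₁real : ∀ i j, (Q₁ i j).im = 0)
    (hQ₂real : ∀ i j, (Q₂ i j).im = 0)
    (hne₁ : Q₁ ≠ P) (hne₂ : Q₂ ≠ P)
    (t₁ : ℝ) (hpst₁ : U A t₁ * P * U A (-t₁) = Q₁)
    (t₂ : ℝ) (hpst₂ : U A t₂ * P * U A (-t₂) = Q₂) :
    Q₁ = Q₂ := by
  have hpst₁ : evolve A t₁ P = Q₁ := hpst₁
  have hpst₂ : evolve A t₂ P = Q₂ := hpst₂
  have ht₁ : t₁ ∉ stabilizer A P := fun h => hne₁ (hpst₁ ▸ h)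
  have ht₂ : t₂ ∉ stabilizer A P := fun h => hne₂ (hpst₂ ▸ h)
  rw [← hpst₁, ← hpst₂]
  exact evolve_eq_evolve_of_sub_mem_stabilizer A <|
    AddSubgroup.sub_mem_of_two_mul_mem (isClosed_stabilizer A P)
    (two_mul_mem_stabilizer A hAreal hPreal hQ₁real hpst₁)
    (two_mul_mem_stabilizer A hAreal hPreal hQ₂real hpst₂) ht₁ ht₂

/-- For a real symmetric `A` and a real density matrix `P`, there
is at most one real density matrix `Q ≠ P` to which `P` admits perfect state
transfer. -/
theorem stmt_11 {n : ℕ} (hn : 1 ≤ n)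
    (A : Matrix (Fin n) (Fin n) ℂ)
    (hAreal : ∀ i j, (A i j).im = 0) (hAsym : Aᵀ = A)
    (P : Matrix (Fin n) (Fin n) ℂ)
    (hP : P.PosSemidef) (hPtr : P.trace = 1) (hPreal : ∀ i j, (P i j).im = 0)
    (Q₁ Q₂ : Matrix (Fin n) (Fin n) ℂ)
    (hQ₁ : Q₁.PosSemidef) (hQ₁tr : Q₁.trace = 1) (hQ₁real : ∀ i j, (Q₁ i j).im = 0)
    (hQ₂ : Q₂.PosSemidef) (hQ₂tr : Q₂.trace = 1) (hQ₂real : ∀ i j, (Q₂ i j).im = 0)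
    (hne₁ : Q₁ ≠ P) (hne₂ : Q₂ ≠ P)
    (t₁ : ℝ) (ht₁ : 0 < t₁) (hpst₁ : U A t₁ * P * U A (-t₁) = Q₁)
    (t₂ : ℝ) (ht₂ : 0 < t₂) (hpst₂ : U A t₂ * P * U A (-t₂) = Q₂) :
    Q₁ = Q₂ :=
  stmt_11_general A hAreal P hPreal Q₁ Q₂ hQ₁real hQ₂real hne₁ hne₂ t₁ hpst₁ t₂ hpst₂
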